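/- For every k ≥ 1 and n > k, the domination polynomial of the k-star satisfies D(S_{k,n−k}, x) = (1+x)^{n−k}((1+x)^k − 1) + x^{n−k}. -/

import Mathlib

open Polynomial

variable {V W : Type*}

/-- `S` is a dominating set of `G`. -/
def Dominates (G : SimpleGraph V) (S : Finset V) : Prop :=
  ∀ v, v ∉ S → ∃ u ∈ S, G.Adj u v

open Classical in
/-- The domination polynomial of a finite simple graph. -/
noncomputable def domPoly [Fintype V] (G : SimpleGraph V) : Polynomial ℤ :=
  ∑ S : Finset V, if Dominates G S then (X : Polynomial ℤ) ^ S.card else 0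

/-- The join of two graphs on disjoint vertex sets. -/
def graphJoin (G : SimpleGraph V) (H : SimpleGraph W) : SimpleGraph (V ⊕ W) where
  Adj x y :=
    match x, y with
    | Sum.inl a, Sum.inl b => G.Adj a b
    | Sum.inr a, Sum.inr b => H.Adj a b
    | _, _ => True
  symm := by
    refine ⟨?_⟩
    rintro (a | a) (b | b) h
    · exact G.adj_symm h
    · trivial
    · trivial
    · exact H.adj_symm h
  loopless := by
    refine ⟨?_⟩
    rintro (a | a) h
    · exact G.irrefl h
    · exact H.irrefl h

/-- The `k`-star `S_{k,s}`: the join of `K_k` with the edgeless graph on `s` vertices. -/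
def kstar (k s : ℕ) : SimpleGraph (Fin k ⊕ Fin s) :=
  graphJoin (⊤ : SimpleGraph (Fin k)) (⊥ : SimpleGraph (Fin s))

/-!
A set `A ⊔ B` dominates the join `G + H` iff (`B ≠ ∅` or `A` dominates `G`) and
(`A ≠ ∅` or `B` dominates `H`). For nonempty vertex sets the dominating sets of the join are thus
the pairs of nonempty sets, the dominating sets of `G` (with `B = ∅`) and those of `H`
(with `A = ∅`), so `D(G + H) = ((1+x)^|V| - 1)((1+x)^|W| - 1) + D(G) + D(H)`.
For the `k`-star, every nonempty set dominates `K_k` and only the whole vertex set dominates an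
edgeless graph.
-/

open Finset

lemma sum_X_pow_card (α : Type*) [Fintype α] :
    ∑ A : Finset α, (X : ℤ[X]) ^ #A = (1 + X) ^ Fintype.card α := by
  simpa [add_comm] using Fintype.sum_pow_mul_eq_add_pow α (X : ℤ[X]) 1

lemma sum_X_pow_card_of_nonempty (α : Type*) [Fintype α] :
    ∑ A : Finset α, (if A.Nonempty then (X : ℤ[X]) ^ #A else 0) =
      (1 + X) ^ Fintype.card α - 1 := by
  classical
  have hsplit : ∀ A : Finset α,
      (X : ℤ[X]) ^ #A = (if A = ∅ then 1 else 0) + if A.Nonempty then X ^ #A else 0 := by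
    intro A
    rcases A.eq_empty_or_nonempty with rfl | hA
    · simp
    · simp [hA, hA.ne_empty]
  rw [← sum_X_pow_card, eq_sub_iff_add_eq, Fintype.sum_congr _ _ hsplit, sum_add_distrib,
    sum_ite_eq' univ ∅, if_pos (mem_univ _), add_comm]

lemma domPoly_eq_sum_ite [Fintype V] (G : SimpleGraph V) [DecidablePred (Dominates G)] :
    domPoly G = ∑ S : Finset V, if Dominates G S then X ^ #S else 0 := by
  unfold domPoly
  congr!

lemma not_dominates_empty [Nonempty V] (G : SimpleGraph V) : ¬ Dominates G ∅ := by
  obtain ⟨v⟩ := ‹Nonempty V›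
  simp [Dominates]

lemma dominates_top_iff [Nonempty V] {A : Finset V} :
    Dominates (⊤ : SimpleGraph V) A ↔ A.Nonempty := by
  refine ⟨fun h => nonempty_iff_ne_empty.2 ?_, fun ⟨u, hu⟩ v hv => ⟨u, hu, ?_⟩⟩
  · rintro rfl
    exact not_dominates_empty _ h
  · rintro rfl
    exact hv hu

lemma dominates_bot_iff [Fintype V] {A : Finset V} :
    Dominates (⊥ : SimpleGraph V) A ↔ A = univ := by
  simp [Dominates, eq_univ_iff_forall]

lemma domPoly_top [Fintype V] [Nonempty V] :
    domPoly (⊤ : SimpleGraph V) = (1 + X) ^ Fintype.card V - 1 := by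
  classical
  simp only [domPoly_eq_sum_ite, dominates_top_iff, sum_X_pow_card_of_nonempty]

lemma domPoly_bot [Fintype V] : domPoly (⊥ : SimpleGraph V) = X ^ Fintype.card V := by
  classical
  simp [domPoly_eq_sum_ite, dominates_bot_iff]

lemma dominates_graphJoin_disjSum_iff {G : SimpleGraph V} {H : SimpleGraph W}
    {A : Finset V} {B : Finset W} :
    Dominates (graphJoin G H) (A.disjSum B) ↔
      (B.Nonempty ∨ Dominates G A) ∧ (A.Nonempty ∨ Dominates H B) := by
  simp only [Dominates, graphJoin, Sum.forall, Sum.exists, inl_mem_disjSum, inr_mem_disjSum,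
    Finset.Nonempty]
  grind

lemma domPoly_graphJoin [Fintype V] [Fintype W] [Nonempty V] [Nonempty W]
    (G : SimpleGraph V) (H : SimpleGraph W) :
    domPoly (graphJoin G H) =
      ((1 + X) ^ Fintype.card V - 1) * ((1 + X) ^ Fintype.card W - 1) + domPoly G + domPoly H := by
  classical
  have hsplit : ∀ (A : Finset V) (B : Finset W),
      (if (B.Nonempty ∨ Dominates G A) ∧ (A.Nonempty ∨ Dominates H B) then
        (X : ℤ[X]) ^ #A * X ^ #B else 0) =
      (if A.Nonempty then X ^ #A else 0) * (if B.Nonempty then X ^ #B else 0) +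
        (if Dominates G A then X ^ #A else 0) * (if B = ∅ then 1 else 0) +
        (if A = ∅ then 1 else 0) * (if Dominates H B then X ^ #B else 0) := by
    intro A B
    rcases A.eq_empty_or_nonempty with rfl | hA <;> rcases B.eq_empty_or_nonempty with rfl | hB <;>
      simp [not_dominates_empty, *, Nonempty.ne_empty]
  rw [domPoly_eq_sum_ite, ← (sumEquiv (α := V) (β := W)).symm.toEquiv.sum_comp,
    Fintype.sum_prod_type]
  simp only [RelIso.coe_fn_toEquiv, sumEquiv_symm_apply, dominates_graphJoin_disjSum_iff,
    card_disjSum, pow_add, hsplit, sum_add_distrib, ← sum_mul_sum, sum_ite_eq', mem_univ, if_true,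
    sum_X_pow_card_of_nonempty, ← domPoly_eq_sum_ite]
  ring

/-- The domination polynomial of the `k`-star `S_{k,n−k}`. -/
theorem domPoly_kstar (k n : ℕ) (hk : 1 ≤ k) (hn : k < n) :
    domPoly (kstar k (n - k)) =
      (1 + X) ^ (n - k) * ((1 + X) ^ k - 1) + X ^ (n - k) := by
  have : Nonempty (Fin k) := Fin.pos_iff_nonempty.mp hk
  have : Nonempty (Fin (n - k)) := Fin.pos_iff_nonempty.mp (Nat.sub_pos_of_lt hn)
  rw [kstar, domPoly_graphJoin, domPoly_top, domPoly_bot]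
  simp only [Fintype.card_fin]
  ring
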